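/- Suppose (X_i, x_i) and (X, x) are proper geodesic spaces and for each i there is a basepoint-preserving σ_i-isometry f_i : X_i → X, where each σ_i is a first degree polynomial with non-negative coefficients and σ_i → 0 pointwise. Then (X_i, x_i) converges to (X, x) in the pointed Gromov-Hausdorff sense. -/

import Mathlib

noncomputable section
open Metric

variable {X : Type*} [MetricSpace X]

def IsEpsChain (ε : ℝ) (l : List X) : Prop :=
  l ≠ [] ∧ l.Chain' (fun a b => dist a b < ε)

def chainLength : List X → ℝ
  | a :: b :: t => dist a b + chainLength (b :: t)
  | _ => 0

def conc (α β : List X) : List X := α ++ β.tail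

def Insertion (α β : List X) : Prop :=
  ∃ (p s : List X) (x : X), p ≠ [] ∧ s ≠ [] ∧ α = p ++ s ∧ β = p ++ x :: s

def Move (ε : ℝ) (α β : List X) : Prop :=
  IsEpsChain ε α ∧ IsEpsChain ε β ∧ (Insertion α β ∨ Insertion β α)

def EpsHomotopic (ε : ℝ) : List X → List X → Prop :=
  Relation.ReflTransGen (Move ε)

def IsEpsNull (ε : ℝ) (l : List X) : Prop := ∃ x, EpsHomotopic ε l [x]

def IsGeodesicSpace (Y : Type*) [MetricSpace Y] : Prop :=
  ∀ x y : Y, ∃ γ : ℝ → Y, γ 0 = x ∧ γ (dist x y) = y ∧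
    ∀ s ∈ Set.Icc (0:ℝ) (dist x y), ∀ t ∈ Set.Icc (0:ℝ) (dist x y),
      dist (γ s) (γ t) = |s - t|

def ChainConnected (Y : Type*) [MetricSpace Y] : Prop :=
  ∀ ε > (0:ℝ), ∀ x y : Y, ∃ l : List Y, IsEpsChain ε l ∧ l.head? = some x ∧ l.getLast? = some y

theorem epsHomotopic_equiv (ε : ℝ) : Equivalence (EpsHomotopic (X := X) ε) := by
  refine ⟨fun _ => Relation.ReflTransGen.refl, ?_, fun h h' => h.trans h'⟩
  intro a b h
  unfold EpsHomotopic at h ⊢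
  induction h with
  | refl => exact Relation.ReflTransGen.refl
  | tail _ hbc ih => exact Relation.ReflTransGen.head ⟨hbc.2.1, hbc.1, hbc.2.2.symm⟩ ih

/-- `f` is a σ-isometry for the first degree polynomial `σ(t) = m t + b`:
distortion at most `σ`, and image a `σ(0)`-net. -/
def IsPolyIsometry {A B : Type*} [MetricSpace A] [MetricSpace B]
    (m c : ℝ) (f : A → B) : Prop :=
  (∀ x y : A, |dist x y - dist (f x) (f y)| ≤ m * dist x y + c) ∧
  ∀ z : B, ∃ w : A, dist z (f w) ≤ c

/-!
Compose `fᵢ` with a retraction onto the `R`-ball about `z`: move each image point towards `z`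
along a geodesic until it lies in the ball. Since `fᵢ (xᵢ) = z`, the image of the `R`-ball
about `xᵢ` lies within `σᵢ(R)` of the ball about `z`, so this moves points by `O(σᵢ(R))`.
Dually, a `σᵢ(0)`-preimage of a point of the ball about `z` lies within `R + O(σᵢ(R))` of `xᵢ`
and can be moved into the ball about `xᵢ` along a geodesic. All errors are
`O((R + 1) (mᵢ + cᵢ))`, which tends to zero.
-/

namespace IsGeodesicSpace

variable {Y : Type*} [MetricSpace Y]

lemma exists_dist_eq_of_le (hY : IsGeodesicSpace Y) (a b : Y) {r : ℝ} (hr0 : 0 ≤ r)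
    (hr : r ≤ dist a b) : ∃ w, dist a w = r ∧ dist w b = dist a b - r := by
  obtain ⟨γ, hγ0, hγ1, hγ⟩ := hY a b
  have start := hγ 0 ⟨le_rfl, dist_nonneg⟩ r ⟨hr0, hr⟩
  have finish := hγ r ⟨hr0, hr⟩ (dist a b) ⟨dist_nonneg, le_rfl⟩
  rw [hγ0] at start
  rw [hγ1] at finish
  refine ⟨γ r, ?_, ?_⟩
  · rw [start, zero_sub, abs_neg, abs_of_nonneg hr0]
  · rw [finish, abs_sub_comm, abs_of_nonneg (sub_nonneg.2 hr)]

/-- The witness lies on a geodesic from `a` to `b`, at distance `min (dist a b) (R - δ)` from `a`. -/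
lemma exists_mem_ball_dist_le (hY : IsGeodesicSpace Y) (a b : Y) {R δ : ℝ} (hδ : 0 < δ)
    (hδR : δ ≤ R) : ∃ w ∈ ball a R, dist w b ≤ max (dist a b - R) 0 + δ := by
  obtain ⟨w, haw, hwb⟩ := hY.exists_dist_eq_of_le a b
    (le_min dist_nonneg (sub_nonneg.2 hδR)) (min_le_left (dist a b) (R - δ))
  refine ⟨w, ?_, ?_⟩
  · rw [mem_ball, dist_comm, haw]
    exact (min_le_right _ _).trans_lt (by linarith)
  · rw [hwb]
    rcases le_total (dist a b) (R - δ) with h | h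
    · rw [min_eq_left h]
      linarith [le_max_right (dist a b - R) 0]
    · rw [min_eq_right h]
      linarith [le_max_left (dist a b - R) 0]

end IsGeodesicSpace

lemma abs_dist_sub_dist_le_of_dist_le {A B : Type*} [PseudoMetricSpace A] [PseudoMetricSpace B]
    {f g : A → B} {D : ℝ} (hfg : ∀ p, dist (g p) (f p) ≤ D) (p q : A) :
    |dist p q - dist (g p) (g q)| ≤ |dist p q - dist (f p) (f q)| + 2 * D := by
  have hmove : |dist (f p) (f q) - dist (g p) (g q)| ≤ 2 * D := by
    have h := dist_dist_dist_le (f p) (f q) (g p) (g q)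
    rw [Real.dist_eq, dist_comm (f p) (g p), dist_comm (f q) (g q)] at h
    linarith [hfg p, hfg q]
  linarith [abs_sub_le (dist p q) (dist (f p) (f q)) (dist (g p) (g q))]

namespace IsPolyIsometry

variable {A B : Type*} [MetricSpace A] [MetricSpace B] {m c : ℝ} {f : A → B}

lemma dist_map_le (hf : IsPolyIsometry m c f) (x y : A) :
    dist (f x) (f y) ≤ (1 + m) * dist x y + c := by
  linarith [(abs_le.1 (hf.1 x y)).1]

lemma dist_le_dist_map (hf : IsPolyIsometry m c f) (x y : A) :
    (1 - m) * dist x y ≤ dist (f x) (f y) + c := by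
  linarith [(abs_le.1 (hf.1 x y)).2]

variable {a : A} {b : B} {R η : ℝ}

lemma exists_mem_ball_near_map (hB : IsGeodesicSpace B) (hf : IsPolyIsometry m c f)
    (hm : 0 ≤ m) (hc : 0 ≤ c) (hfa : f a = b) (hη : 0 < η) (hηR : η ≤ R) (p : ball a R) :
    ∃ w ∈ ball b R, dist w (f p) ≤ m * R + c + η := by
  obtain ⟨w, hw, hwp⟩ := hB.exists_mem_ball_dist_le b (f p) hη hηR
  have hR : 0 ≤ R := hη.le.trans hηR
  refine ⟨w, hw, hwp.trans (add_le_add_left (max_le ?_ ?_) η)⟩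
  · have hp : dist a p ≤ R := by rw [dist_comm]; exact (mem_ball.1 p.2).le
    have := hf.dist_map_le a p
    rw [hfa] at this
    nlinarith
  · positivity

/-- A `c`-preimage of `u` lies within about `R` of `a`, so pulling it into the ball moves it
little. -/
lemma exists_mem_ball_dist_map_le (hA : IsGeodesicSpace A) (hf : IsPolyIsometry m c f)
    (hm : 0 ≤ m) (hfa : f a = b) (hη : 0 < η) (hη2 : η ≤ 1 / 2) (hηR : η ≤ R)
    (hmη : m ≤ η) (hcη : c ≤ η) (u : ball b R) :
    ∃ w ∈ ball a R, dist (u : B) (f w) ≤ (3 * R + 10) * η := by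
  obtain ⟨w', hw'⟩ := hf.2 u
  have hbw' : dist b (f w') ≤ R + c := by
    linarith [dist_triangle b u (f w'), (mem_ball'.1 u.2).le]
  have haw' : dist a w' - R ≤ (2 * R + 4) * η := by
    have h := hf.dist_le_dist_map a w'
    rw [hfa] at h
    -- `m ≤ 1 / 2` makes `(1 - m)⁻¹ ≤ 2`
    have hcrude : dist a w' ≤ 2 * R + 2 := by nlinarith [dist_nonneg (x := a) (y := w')]
    nlinarith [dist_nonneg (x := a) (y := w')]
  obtain ⟨w, hw, hww'⟩ := hA.exists_mem_ball_dist_le a w' hη hηR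
  have hww'η : dist w w' ≤ (2 * R + 5) * η := by
    refine hww'.trans ?_
    have : max (dist a w' - R) 0 ≤ (2 * R + 4) * η := max_le haw' (by nlinarith)
    linarith
  refine ⟨w, hw, ?_⟩
  have hf_ww' := hf.dist_map_le w' w
  rw [dist_comm w'] at hf_ww'
  calc dist (u : B) (f w) ≤ dist (u : B) (f w') + dist (f w') (f w) := dist_triangle _ _ _
    _ ≤ c + ((1 + m) * dist w w' + c) := add_le_add hw' hf_ww'
    _ ≤ η + ((1 + 1 / 2) * ((2 * R + 5) * η) + η) := by
        gcongr
        linarith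
    _ ≤ (3 * R + 10) * η := by nlinarith

theorem exists_ball_isometry (hA : IsGeodesicSpace A) (hB : IsGeodesicSpace B)
    (hf : IsPolyIsometry m c f) (hm : 0 ≤ m) (hc : 0 ≤ c) (hfa : f a = b) (hη : 0 < η)
    (hη2 : η ≤ 1 / 2) (hηR : η ≤ R) (hmη : m ≤ η) (hcη : c ≤ η) :
    ∃ g : ball a R → ball b R, IsPolyIsometry 0 ((4 * R + 12) * η) g := by
  choose g hg_mem hg_near using hf.exists_mem_ball_near_map hB hm hc hfa hη hηR
  have hR : 0 ≤ R := hη.le.trans hηR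
  have hD : ∀ p, dist (g p) (f p) ≤ (R + 2) * η := fun p => (hg_near p).trans (by nlinarith)
  refine ⟨fun p => ⟨g p, hg_mem p⟩, fun p q => ?_, fun u => ?_⟩
  · have hpq : dist (p : A) q ≤ 2 * R := by
      linarith [dist_triangle_right (p : A) q a, mem_ball.1 p.2, mem_ball.1 q.2]
    have hdist := abs_dist_sub_dist_le_of_dist_le hD p q
    rw [zero_mul, zero_add]
    calc |dist p q - dist (g p) (g q)| ≤ (m * dist p q + c) + 2 * ((R + 2) * η) :=
          hdist.trans (add_le_add_left (hf.1 p q) _)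
      _ ≤ (η * (2 * R) + η) + 2 * ((R + 2) * η) := by
          gcongr
          exact hpq
      _ ≤ (4 * R + 12) * η := by nlinarith
  · obtain ⟨w, hw, huw⟩ := hf.exists_mem_ball_dist_map_le hA hm hfa hη hη2 hηR hmη hcη u
    refine ⟨⟨w, hw⟩, ?_⟩
    calc dist (u : B) (g ⟨w, hw⟩) ≤ dist (u : B) (f w) + dist (g ⟨w, hw⟩) (f w) :=
          dist_triangle_right _ _ _
      _ ≤ (3 * R + 10) * η + (R + 2) * η := add_le_add huw (hD _)
      _ = (4 * R + 12) * η := by ring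

end IsPolyIsometry

theorem statement5_general {Xi : ℕ → Type*} [∀ i, MetricSpace (Xi i)] {Z : Type*} [MetricSpace Z]
    (hgeo : ∀ i, IsGeodesicSpace (Xi i)) (hgeoZ : IsGeodesicSpace Z)
    (x : ∀ i, Xi i) (z : Z) (m c : ℕ → ℝ) (hm : ∀ i, 0 ≤ m i) (hc : ∀ i, 0 ≤ c i)
    (f : ∀ i, Xi i → Z) (hbase : ∀ i, f i (x i) = z)
    (hiso : ∀ i, IsPolyIsometry (m i) (c i) (f i))
    (hm0 : Filter.Tendsto m Filter.atTop (nhds 0))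
    (hc0 : Filter.Tendsto c Filter.atTop (nhds 0)) :
    ∀ R > (1:ℝ), ∀ s : ℝ, 0 < s → s < 1 → ∃ N : ℕ, ∀ i ≥ N,
      ∃ g : Metric.ball (x i) R → Metric.ball z R,
        (∀ p q, |dist p q - dist (g p) (g q)| ≤ s) ∧
        ∀ u : Metric.ball z R, ∃ w, dist u (g w) ≤ s := by
  intro R hR s hs hs1
  have hK : 0 < 4 * R + 12 := by linarith
  set η := s / (4 * R + 12)
  have hη : 0 < η := div_pos hs hK
  have hη2 : η ≤ 1 / 2 := by rw [div_le_iff₀ hK]; linarith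
  obtain ⟨N, hN⟩ := Filter.eventually_atTop.1
    ((hm0.eventually_le_const hη).and (hc0.eventually_le_const hη))
  refine ⟨N, fun i hi => ?_⟩
  obtain ⟨g, hg_dist, hg_net⟩ := (hiso i).exists_ball_isometry (hgeo i) hgeoZ (hm i) (hc i)
    (hbase i) hη hη2 (R := R) (by linarith) (hN i hi).1 (hN i hi).2
  rw [mul_div_cancel₀ s hK.ne'] at hg_dist hg_net
  exact ⟨g, fun p q => by simpa using hg_dist p q, hg_net⟩

/-- σᵢ-isometries with σᵢ → 0 between proper geodesic spaces give pointed
Gromov-Hausdorff convergence: for every `R > 1` and `s ∈ (0,1)`, eventually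
there is a constant-`s`-isometry between the `R`-balls about the basepoints. -/
theorem statement5 {Xi : ℕ → Type*} [∀ i, MetricSpace (Xi i)] {Z : Type*} [MetricSpace Z]
    [∀ i, ProperSpace (Xi i)] [ProperSpace Z]
    (hgeo : ∀ i, IsGeodesicSpace (Xi i)) (hgeoZ : IsGeodesicSpace Z)
    (x : ∀ i, Xi i) (z : Z) (m c : ℕ → ℝ) (hm : ∀ i, 0 ≤ m i) (hc : ∀ i, 0 ≤ c i)
    (f : ∀ i, Xi i → Z) (hbase : ∀ i, f i (x i) = z)
    (hiso : ∀ i, IsPolyIsometry (m i) (c i) (f i))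
    (hm0 : Filter.Tendsto m Filter.atTop (nhds 0))
    (hc0 : Filter.Tendsto c Filter.atTop (nhds 0)) :
    ∀ R > (1:ℝ), ∀ s : ℝ, 0 < s → s < 1 → ∃ N : ℕ, ∀ i ≥ N,
      ∃ g : Metric.ball (x i) R → Metric.ball z R,
        (∀ p q, |dist p q - dist (g p) (g q)| ≤ s) ∧
        ∀ u : Metric.ball z R, ∃ w, dist u (g w) ≤ s :=
  statement5_general hgeo hgeoZ x z m c hm hc f hbase hiso hm0 hc0
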